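/- arXiv:1401.5522 — 3 statements merged into one kernel-verified Lean document; each statement's English description precedes it below -/
import Mathlib

section
/- If the Max criterion holds at step k, i.e., α · ‖(A_kk^(k))⁻¹‖₁⁻¹ ≥ max_{i>k} ‖A_{i,k}^(k)‖₁, then for all i,j > k the updated tile A_{i,j}^(k+1) = A_{i,j}^(k) − A_{i,k}^(k) (A_{k,k}^(k))⁻¹ A_{k,j}^(k) satisfies ‖A_{i,j}^(k+1)‖₁ ≤ (1+α) · max_{i'≥k} ‖A_{i',j}^(k)‖₁. -/
/-!
The tile `A i j - A i k (A k k)⁻¹ A k j` is bounded by the triangle inequality and the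
submultiplicativity of the 1-norm, and the Max criterion says exactly that
`‖A i k‖₁ ‖(A k k)⁻¹‖₁ ≤ α`; both `A i j` and `A k j` lie in column `j` at rows `≥ k`.
The 1-norm of `M` is the `∞`-operator norm (max row sum) of `Mᵀ`, whose triangle inequality
and submultiplicativity are already in Mathlib.
-/

/-- The induced matrix 1-norm (maximum absolute column sum). -/
noncomputable def norm1 {ι κ : Type*} [Fintype ι] [Fintype κ] (M : Matrix ι κ ℝ) : ℝ :=
  ⨆ j, ∑ i, |M i j|

open scoped Matrix

section Norm1

variable {ι κ μ ν : Type*} [Fintype ι] [Fintype κ] [Fintype μ] [Fintype ν]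

attribute [local instance] Matrix.linftyOpNormedAddCommGroup

theorem norm1_eq_norm_transpose (M : Matrix ι κ ℝ) : norm1 M = ‖Mᵀ‖ := by
  simp [Matrix.linfty_opNorm_def, Finset.sup_univ_eq_ciSup, NNReal.coe_iSup, norm1]

theorem norm1_nonneg (M : Matrix ι κ ℝ) : 0 ≤ norm1 M := by
  rw [norm1_eq_norm_transpose]
  exact norm_nonneg _

theorem norm1_sub_le (M N : Matrix ι κ ℝ) : norm1 (M - N) ≤ norm1 M + norm1 N := by
  simpa only [norm1_eq_norm_transpose, Matrix.transpose_sub] using norm_sub_le Mᵀ Nᵀ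

theorem norm1_mul_le (M : Matrix ι μ ℝ) (N : Matrix μ κ ℝ) :
    norm1 (M * N) ≤ norm1 M * norm1 N := by
  simpa only [norm1_eq_norm_transpose, Matrix.transpose_mul, mul_comm (‖Mᵀ‖)]
    using Matrix.linfty_opNorm_mul Nᵀ Mᵀ

theorem norm1_sub_mul_mul_le (X : Matrix ι κ ℝ) (L : Matrix ι μ ℝ) (P : Matrix μ ν ℝ)
    (U : Matrix ν κ ℝ) {α : ℝ} (hα : 0 ≤ α) (hL : norm1 L ≤ α * (norm1 P)⁻¹) :
    norm1 (X - L * P * U) ≤ norm1 X + α * norm1 U := by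
  have hLP : norm1 L * norm1 P ≤ α := by
    rcases (norm1_nonneg P).eq_or_lt with hP | hP
    · rwa [← hP, mul_zero]
    · exact (le_mul_inv_iff₀ hP).mp hL
  calc norm1 (X - L * P * U)
      ≤ norm1 X + norm1 L * norm1 P * norm1 U := by
        grw [norm1_sub_le, norm1_mul_le, norm1_mul_le]
        exact norm1_nonneg U
    _ ≤ norm1 X + α * norm1 U := by grw [hLP]; exact norm1_nonneg U

end Norm1

theorem max_criterion_one_step_general
    {n nb : ℕ} (A : Fin n → Fin n → Matrix (Fin nb) (Fin nb) ℝ)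
    (k : Fin n) (α : ℝ) (hα : 0 < α)
    (hcrit : ∀ i, k < i → norm1 (A i k) ≤ α * (norm1 ((A k k)⁻¹))⁻¹) :
    ∀ i j, k < i → k < j →
      norm1 (A i j - A i k * (A k k)⁻¹ * A k j)
        ≤ (1 + α) * ⨆ i' : {i' : Fin n // k ≤ i'}, norm1 (A i'.val j) := by
  intro i j hi _
  set colMax := ⨆ i' : {i' : Fin n // k ≤ i'}, norm1 (A i'.val j)
  have le_colMax (i' : Fin n) (h : k ≤ i') : norm1 (A i' j) ≤ colMax :=
    le_ciSup (f := fun i' : {i' : Fin n // k ≤ i'} ↦ norm1 (A i'.val j))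
      (Set.finite_range _).bddAbove ⟨i', h⟩
  calc norm1 (A i j - A i k * (A k k)⁻¹ * A k j)
      ≤ norm1 (A i j) + α * norm1 (A k j) := norm1_sub_mul_mul_le _ _ _ _ hα.le (hcrit i hi)
    _ ≤ colMax + α * colMax := by
        grw [le_colMax i hi.le, le_colMax k le_rfl]
    _ = (1 + α) * colMax := by ring

/-- If the Max criterion holds at step `k`, then every Schur-updated tile's 1-norm is
bounded by `(1+α)` times the largest tile norm in the same column among rows `≥ k`. -/
theorem max_criterion_one_step
    {n nb : ℕ} (A : Fin n → Fin n → Matrix (Fin nb) (Fin nb) ℝ)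
    (k : Fin n) (α : ℝ) (hα : 0 < α)
    (hinv : IsUnit (A k k))
    (hcrit : ∀ i, k < i → norm1 (A i k) ≤ α * (norm1 ((A k k)⁻¹))⁻¹) :
    ∀ i j, k < i → k < j →
      norm1 (A i j - A i k * (A k k)⁻¹ * A k j)
        ≤ (1 + α) * ⨆ i' : {i' : Fin n // k ≤ i'}, norm1 (A i'.val j) :=
  max_criterion_one_step_general A k α hα hcrit
end

section
/- For the n-by-n scalar matrix A with A_{ii} = α⁻¹ for i < n, A_{in} = 1 for all i, A_{ij} = −1 for i > j (j < n), and zeros elsewhere, Gaussian elimination without pivoting (which satisfies the Max criterion with threshold α at every step) produces entries in the last column growing as (1+α)^{k} at step k; in particular the final entry equals (1+α)^{n−1}, attaining the growth factor bound (1+α)^{n−1}. -/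
/-- For the `(n+1)×(n+1)` matrix with `α⁻¹` on the diagonal (except the last entry, `1`),
`-1` below the diagonal, and `1` in the last column, Gaussian elimination without
pivoting satisfies the Max criterion with threshold `α` at every step, the entries of the
last column in rows `≥ k` equal `(1+α)^k` after `k` steps, and in particular the final
entry equals `(1+α)^n`, attaining the growth factor bound. -/
theorem growth_factor_bound_attained
    {n : ℕ} (α : ℝ) (hα : 0 < α)
    (B : ℕ → Matrix (Fin (n + 1)) (Fin (n + 1)) ℝ)
    (hB0 : ∀ i j : Fin (n + 1), B 0 i j =
      if j = Fin.last n then 1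
      else if i = j then α⁻¹
      else if j < i then -1 else 0)
    (hupd : ∀ k : Fin (n + 1), ∀ i j : Fin (n + 1),
      B (k.val + 1) i j =
        if k < i ∧ k < j then
          B k.val i j - B k.val i k * B k.val k j / B k.val k k
        else B k.val i j) :
    (∀ k : Fin (n + 1), ∀ i : Fin (n + 1), k < i →
        |B k.val i k| ≤ α * |B k.val k k|) ∧
    (∀ k : ℕ, k ≤ n → ∀ i : Fin (n + 1), k ≤ i.val →
        B k i (Fin.last n) = (1 + α) ^ k) ∧
    B n (Fin.last n) (Fin.last n) = (1 + α) ^ n := by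
  have hne : (α : ℝ)⁻¹ ≠ 0 := inv_ne_zero hα.ne'
  have main : ∀ k : ℕ, k ≤ n → ∀ i j : Fin (n + 1), k ≤ i.val → k ≤ j.val →
      B k i j = if j = Fin.last n then (1 + α) ^ k else if i = j then α⁻¹
        else if j < i then -1 else 0 := by
    intro k
    induction k with
    | zero =>
      intro _ i j _ _
      rw [hB0]
      by_cases hj : j = Fin.last n <;> simp [hj]
    | succ k ih =>
      intro hk i j hi hj
      have hkn : k < n := hk
      have hk' : k ≤ n := hkn.le
      set kf : Fin (n + 1) := ⟨k, by omega⟩ with hkf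
      have h1 := hupd kf i j
      have hki : kf < i := by simp only [Fin.lt_def, hkf]; omega
      have hkj : kf < j := by simp only [Fin.lt_def, hkf]; omega
      rw [if_pos ⟨hki, hkj⟩] at h1
      have hkl : kf ≠ Fin.last n := by
        simp only [Fin.ne_iff_vne, Fin.val_last]; omega
      have hdiag : B k kf kf = α⁻¹ := by
        rw [ih hk' kf kf le_rfl le_rfl, if_neg hkl, if_pos rfl]
      have hik : B k i kf = -1 := by
        rw [ih hk' i kf (by omega) le_rfl, if_neg hkl, if_neg hki.ne',
          if_pos hki]
      have hkjv : B k kf j = if j = Fin.last n then (1 + α) ^ k else 0 := by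
        rw [ih hk' kf j le_rfl (by omega)]
        by_cases hj' : j = Fin.last n
        · simp [hj']
        · rw [if_neg hj', if_neg hkj.ne, if_neg (not_lt.mpr hkj.le), if_neg hj']
      by_cases hj' : j = Fin.last n
      · rw [if_pos hj']
        rw [h1, hik, hdiag, hkjv, if_pos hj',
          ih hk' i j (by omega) (by omega), if_pos hj']
        field_simp
        ring
      · rw [if_neg hj']
        rw [h1, hik, hdiag, hkjv, if_neg hj',
          ih hk' i j (by omega) (by omega), if_neg hj']
        simp
  refine ⟨?_, ?_, ?_⟩
  · intro k i hki
    have hiv : i.val ≤ n := Nat.lt_succ_iff.mp i.isLt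
    have hkn : k.val < n := lt_of_lt_of_le hki hiv
    have hkl : k ≠ Fin.last n := by
      simp only [Fin.ne_iff_vne, Fin.val_last]; omega
    have h1 : B k.val i k = -1 := by
      rw [main k.val hkn.le i k (le_of_lt hki) le_rfl, if_neg hkl,
        if_neg hki.ne', if_pos hki]
    have h2 : B k.val k k = α⁻¹ := by
      rw [main k.val hkn.le k k le_rfl le_rfl, if_neg hkl, if_pos rfl]
    rw [h1, h2, abs_neg, abs_one, abs_inv, abs_of_pos hα,
      mul_inv_cancel₀ hα.ne']
  · intro k hk i hi
    rw [main k hk i (Fin.last n) hi (by simp [hk]), if_pos rfl]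
  · rw [main n le_rfl (Fin.last n) (Fin.last n) (by simp) (by simp), if_pos rfl]
end

section
/- A scalar matrix that is diagonally dominant by columns remains diagonally dominant by columns after one step of Gaussian elimination without pivoting, and the largest absolute entry at most doubles over the whole elimination (growth factor at most 2). -/
/-!
Eliminating with pivot `p` bounds each new entry by `|m i j| + |m i p| * (|m p j| / |m p p|)`.
Summed over a column, dominance of column `p` absorbs the second term into `|m p j|`, which is
exactly the entry dropped with the pivot row: the Schur complement is again diagonally dominant
by columns, and the absolute column sums of the active block never increase. Once an entry
leaves the active block it never changes, so every entry ever computed is bounded by an absolute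
column sum of `A`, which dominance bounds by `2 * |a j j|`. With Lean's `x / 0 = 0` a zero pivot
makes the step the identity, and the estimates hold without a case split.
-/

open Finset

theorem mul_div_le_of_nonneg {K : Type*} [Field K] [LinearOrder K] [IsStrictOrderedRing K]
    {a : K} (b : K) (ha : 0 ≤ a) : b * (a / b) ≤ a := by
  rcases eq_or_ne b 0 with rfl | hb
  · simpa using ha
  · rw [mul_div_cancel₀ _ hb]

namespace Matrix

variable {ι : Type*}

-- Applied to every entry; elimination only uses it on the block beyond the pivot.
noncomputable def gaussStep (M : Matrix ι ι ℝ) (p : ι) : Matrix ι ι ℝ :=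
  fun i j => M i j - M i p * M p j / M p p

theorem abs_gaussStep_le (M : Matrix ι ι ℝ) (p i j : ι) :
    |M.gaussStep p i j| ≤ |M i j| + |M i p| * (|M p j| / |M p p|) := by
  rw [← abs_div, ← abs_mul, ← mul_div_assoc]
  exact abs_sub _ _

theorem abs_diag_sub_le_abs_gaussStep (M : Matrix ι ι ℝ) (p j : ι) :
    |M j j| - |M j p| * (|M p j| / |M p p|) ≤ |M.gaussStep p j j| := by
  rw [← abs_div, ← abs_mul, ← mul_div_assoc]
  exact abs_sub_abs_le_abs_sub _ _

theorem sum_abs_gaussStep_le (M : Matrix ι ι ℝ) (p j : ι) (t : Finset ι) :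
    ∑ i ∈ t, |M.gaussStep p i j| ≤
      ∑ i ∈ t, |M i j| + (∑ i ∈ t, |M i p|) * (|M p j| / |M p p|) := by
  rw [sum_mul, ← sum_add_distrib]
  exact sum_le_sum fun i _ => abs_gaussStep_le M p i j

variable [DecidableEq ι]

def ColDiagDominantOn (M : Matrix ι ι ℝ) (s : Finset ι) : Prop :=
  ∀ j ∈ s, ∑ i ∈ s.erase j, |M i j| ≤ |M j j|

variable {M N : Matrix ι ι ℝ} {s : Finset ι} {p : ι}

theorem ColDiagDominantOn.congr (hM : ColDiagDominantOn M s)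
    (h : ∀ i ∈ s, ∀ j ∈ s, M i j = N i j) : ColDiagDominantOn N s := by
  intro j hj
  rw [← h j hj j hj]
  refine (sum_congr rfl fun i hi => ?_).trans_le (hM j hj)
  rw [h i (mem_of_mem_erase hi) j hj]

theorem ColDiagDominantOn.submatrix {κ : Type*} [DecidableEq κ] {s : Finset κ} (e : κ ↪ ι)
    (hM : ColDiagDominantOn M (s.map e)) : ColDiagDominantOn (M.submatrix e e) s := by
  intro j hj
  simpa only [← map_erase, sum_map, submatrix_apply] using hM (e j) (mem_map_of_mem e hj)

theorem ColDiagDominantOn.sum_abs_le_two_mul (hM : ColDiagDominantOn M s) {j : ι}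
    (hj : j ∈ s) : ∑ i ∈ s, |M i j| ≤ 2 * |M j j| := by
  rw [← add_sum_erase s _ hj]
  linarith [hM j hj]

theorem ColDiagDominantOn.sum_abs_gaussStep_le_sum_abs (hM : ColDiagDominantOn M s) (hp : p ∈ s)
    (j : ι) : ∑ i ∈ s.erase p, |M.gaussStep p i j| ≤ ∑ i ∈ s, |M i j| :=
  calc ∑ i ∈ s.erase p, |M.gaussStep p i j|
      ≤ ∑ i ∈ s.erase p, |M i j| + (∑ i ∈ s.erase p, |M i p|) * (|M p j| / |M p p|) :=
        sum_abs_gaussStep_le M p j _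
    _ ≤ ∑ i ∈ s.erase p, |M i j| + |M p p| * (|M p j| / |M p p|) := by grw [hM p hp]
    _ ≤ ∑ i ∈ s.erase p, |M i j| + |M p j| := by grw [mul_div_le_of_nonneg _ (abs_nonneg _)]
    _ = ∑ i ∈ s, |M i j| := sum_erase_add s _ hp

theorem ColDiagDominantOn.gaussStep (hM : ColDiagDominantOn M s) (hp : p ∈ s) :
    ColDiagDominantOn (M.gaussStep p) (s.erase p) := by
  intro j hj
  obtain ⟨hjp, hjs⟩ := mem_erase.mp hj
  set r := |M p j| / |M p p|
  have hcol_j : ∑ i ∈ (s.erase p).erase j, |M i j| + |M p j| ≤ |M j j| := by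
    rw [erase_right_comm, sum_erase_add _ _ (mem_erase.mpr ⟨hjp.symm, hp⟩)]
    exact hM j hjs
  have hcol_p : ∑ i ∈ (s.erase p).erase j, |M i p| + |M j p| ≤ |M p p| := by
    rw [sum_erase_add _ _ hj]
    exact hM p hp
  calc ∑ i ∈ (s.erase p).erase j, |M.gaussStep p i j|
      ≤ ∑ i ∈ (s.erase p).erase j, |M i j| + (∑ i ∈ (s.erase p).erase j, |M i p|) * r :=
        sum_abs_gaussStep_le M p j _
    _ ≤ (|M j j| - |M p j|) + (|M p p| - |M j p|) * r := by
        gcongr <;> linarith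
    _ ≤ |M j j| - |M j p| * r := by linarith [mul_div_le_of_nonneg |M p p| (abs_nonneg (M p j))]
    _ ≤ |M.gaussStep p j j| := abs_diag_sub_le_abs_gaussStep M p j

end Matrix

open Matrix

def activeIndices (n k : ℕ) : Finset (Fin (n + 1)) := {i | k ≤ (i : ℕ)}

@[simp]
theorem mem_activeIndices {n k : ℕ} {i : Fin (n + 1)} : i ∈ activeIndices n k ↔ k ≤ i := by
  simp [activeIndices]

theorem activeIndices_zero (n : ℕ) : activeIndices n 0 = univ := by
  ext; simp

theorem erase_activeIndices {n k : ℕ} (hk : k < n + 1) :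
    (activeIndices n k).erase ⟨k, hk⟩ = activeIndices n (k + 1) := by
  ext i
  simp only [mem_erase, mem_activeIndices, ne_eq, Fin.ext_iff]
  omega

def IsGaussianElimination {n : ℕ} (B : ℕ → Matrix (Fin (n + 1)) (Fin (n + 1)) ℝ) : Prop :=
  ∀ k : Fin (n + 1), ∀ i j : Fin (n + 1),
    B (k + 1) i j = if k < i ∧ k < j then (B k).gaussStep k i j else B k i j

namespace IsGaussianElimination

variable {n : ℕ} {B : ℕ → Matrix (Fin (n + 1)) (Fin (n + 1)) ℝ}

theorem succ_apply_of_lt (hB : IsGaussianElimination B) {k : ℕ} (hk : k < n + 1)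
    {i j : Fin (n + 1)} (hi : k < i) (hj : k < j) :
    B (k + 1) i j = (B k).gaussStep ⟨k, hk⟩ i j := by
  simpa [Fin.lt_def, hi, hj] using hB ⟨k, hk⟩ i j

theorem succ_apply_of_le (hB : IsGaussianElimination B) {k : ℕ} (hk : k < n + 1)
    {i j : Fin (n + 1)} (h : (i : ℕ) ≤ k ∨ (j : ℕ) ≤ k) :
    B (k + 1) i j = B k i j := by
  rw [hB ⟨k, hk⟩ i j, if_neg]
  simp only [Fin.lt_def]
  omega

theorem apply_eq_apply_min (hB : IsGaussianElimination B) {k : ℕ} (hk : k ≤ n + 1)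
    {i j : Fin (n + 1)} (hmin : min (i : ℕ) j ≤ k) : B k i j = B (min (i : ℕ) j) i j := by
  induction k, hmin using Nat.le_induction with
  | base => rfl
  | succ k hk' ih => rw [hB.succ_apply_of_le (by omega) (by omega), ih (by omega)]

theorem colDiagDominantOn_and_sum_abs_le (hB : IsGaussianElimination B)
    (h0 : ColDiagDominantOn (B 0) univ) {k : ℕ} (hk : k ≤ n + 1) :
    ColDiagDominantOn (B k) (activeIndices n k) ∧
      ∀ j ∈ activeIndices n k, ∑ i ∈ activeIndices n k, |B k i j| ≤ ∑ i, |B 0 i j| := by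
  induction k with
  | zero => simpa [activeIndices_zero] using h0
  | succ k ih =>
    obtain ⟨hdom, hsum⟩ := ih (by omega)
    have hk : k < n + 1 := by omega
    have hp : (⟨k, hk⟩ : Fin (n + 1)) ∈ activeIndices n k := by simp
    have hB_eq : ∀ i ∈ activeIndices n (k + 1), ∀ j ∈ activeIndices n (k + 1),
        (B k).gaussStep ⟨k, hk⟩ i j = B (k + 1) i j := fun i hi j hj =>
      (hB.succ_apply_of_lt hk (mem_activeIndices.mp hi) (mem_activeIndices.mp hj)).symm
    rw [← erase_activeIndices hk] at hB_eq ⊢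
    refine ⟨(hdom.gaussStep hp).congr hB_eq, fun j hj => ?_⟩
    rw [← sum_congr rfl fun i hi => congrArg abs (hB_eq i hi j hj)]
    exact (hdom.sum_abs_gaussStep_le_sum_abs hp j).trans (hsum j (mem_of_mem_erase hj))

theorem abs_apply_le_sum_abs (hB : IsGaussianElimination B)
    (h0 : ColDiagDominantOn (B 0) univ) {k : ℕ} (hk : k ≤ n + 1) (i j : Fin (n + 1)) :
    |B k i j| ≤ ∑ i', |B 0 i' j| := by
  wlog hmin : k ≤ min (i : ℕ) j generalizing k
  · rw [hB.apply_eq_apply_min hk (by omega)]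
    exact this (by omega) le_rfl
  have hi : i ∈ activeIndices n k := mem_activeIndices.mpr (by omega)
  have hj : j ∈ activeIndices n k := mem_activeIndices.mpr (by omega)
  calc |B k i j| ≤ ∑ i' ∈ activeIndices n k, |B k i' j| :=
        single_le_sum (f := fun i' => |B k i' j|) (fun _ _ => abs_nonneg _) hi
    _ ≤ ∑ i', |B 0 i' j| := (hB.colDiagDominantOn_and_sum_abs_le h0 hk).2 j hj

end IsGaussianElimination

theorem diag_dominant_growth_two_general
    {n : ℕ}
    (A : Matrix (Fin (n + 1)) (Fin (n + 1)) ℝ)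
    (hdd : ∀ j, ∑ i ∈ Finset.univ.filter (fun i => i ≠ j), |A i j| ≤ |A j j|)
    (B : ℕ → Matrix (Fin (n + 1)) (Fin (n + 1)) ℝ)
    (hB0 : B 0 = A)
    (hupd : ∀ k : Fin (n + 1), ∀ i j : Fin (n + 1),
      B (k.val + 1) i j =
        if k < i ∧ k < j then
          B k.val i j - B k.val i k * B k.val k j / B k.val k k
        else B k.val i j) :
    (∀ j : Fin n,
      ∑ i ∈ Finset.univ.filter (fun i => i ≠ j),
          |A i.succ j.succ - A i.succ 0 * A 0 j.succ / A 0 0|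
        ≤ |A j.succ j.succ - A j.succ 0 * A 0 j.succ / A 0 0|) ∧
    (∀ k : ℕ, k ≤ n + 1 → ∀ i j : Fin (n + 1),
      |B k i j| ≤ 2 * ⨆ p : Fin (n + 1) × Fin (n + 1), |A p.1 p.2|) := by
  have hA : ColDiagDominantOn A univ := fun j _ => by simpa only [filter_ne'] using hdd j
  have hB : IsGaussianElimination B := hupd
  constructor
  · have hsucc : univ.map (Fin.succEmb n) = univ.erase 0 := by
      ext i; simp [Fin.exists_succ_eq]
    have hS := hA.gaussStep (mem_univ 0)
    rw [← hsucc] at hS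
    intro j
    rw [filter_ne']
    exact hS.submatrix (Fin.succEmb n) j (mem_univ j)
  · intro k hk i j
    calc |B k i j| ≤ ∑ i', |A i' j| := hB0 ▸ hB.abs_apply_le_sum_abs (hB0 ▸ hA) hk i j
      _ ≤ 2 * |A j j| := hA.sum_abs_le_two_mul (mem_univ j)
      _ ≤ 2 * ⨆ p : Fin (n + 1) × Fin (n + 1), |A p.1 p.2| := by
        gcongr
        exact le_ciSup (f := fun p : Fin (n + 1) × Fin (n + 1) => |A p.1 p.2|)
          (Finite.bddAbove_range _) (j, j)

/-- A scalar matrix that is diagonally dominant by columns stays diagonally dominant by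
columns after one step of Gaussian elimination without pivoting, and the largest absolute
entry at most doubles over the whole elimination (growth factor at most 2). -/
theorem diag_dominant_growth_two
    {n : ℕ}
    (A : Matrix (Fin (n + 1)) (Fin (n + 1)) ℝ)
    (hdd : ∀ j, ∑ i ∈ Finset.univ.filter (fun i => i ≠ j), |A i j| ≤ |A j j|)
    (h11 : A 0 0 ≠ 0)
    (B : ℕ → Matrix (Fin (n + 1)) (Fin (n + 1)) ℝ)
    (hB0 : B 0 = A)
    (hupd : ∀ k : Fin (n + 1), ∀ i j : Fin (n + 1),
      B (k.val + 1) i j =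
        if k < i ∧ k < j then
          B k.val i j - B k.val i k * B k.val k j / B k.val k k
        else B k.val i j) :
    (∀ j : Fin n,
      ∑ i ∈ Finset.univ.filter (fun i => i ≠ j),
          |A i.succ j.succ - A i.succ 0 * A 0 j.succ / A 0 0|
        ≤ |A j.succ j.succ - A j.succ 0 * A 0 j.succ / A 0 0|) ∧
    (∀ k : ℕ, k ≤ n + 1 → ∀ i j : Fin (n + 1),
      |B k i j| ≤ 2 * ⨆ p : Fin (n + 1) × Fin (n + 1), |A p.1 p.2|) :=
  diag_dominant_growth_two_general A hdd B hB0 hupd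
end
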